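/- Let p be a positive integer, C a real symmetric positive definite p×p matrix with largest eigenvalue λ_max(C), v ∈ ℝ^p nonzero, ρ_1, ρ_2 > 0, and c_l, c_u > 0. Define θ(ξ) = ρ_1 ρ_2 ξ v^T (I_p − ξ C)^{−1} v, q(ξ) = (ξ²/p) tr(((I_p − ξ C)^{−1} C)²), s(ξ) = ρ_1 ρ_2 ξ² v^T (I_p − ξ C)^{−1} C (I_p − ξ C)^{−1} v. Assume there exists ξ_m ∈ (0, 1/λ_max(C)) with θ(ξ_m) = 1, and let ξ_sup = ξ_m if q(ξ) < c_u for all ξ ∈ (0, ξ_m), and otherwise the unique ξ_{σ²} ∈ (0, ξ_m] with q(ξ_{σ²}) = c_u. On (0, ξ_sup) define m(ξ) = 2 c_l θ(ξ)/(c_u (1 − θ(ξ))) and σ²(ξ) = [ρ_1 ρ_2 (2 c_l + m(ξ) c_u)² s(ξ) + ρ_1 ρ_2 (4 c_l + m(ξ)² c_u) q(ξ)] / (c_u (c_u − q(ξ))). Then the function F(ξ) = ρ_1 ρ_2 m(ξ)² + σ²(ξ) is strictly increasing on (0, ξ_sup), F(ξ) → 0 as ξ → 0⁺, and F(ξ)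 → +∞ as ξ → ξ_sup⁻; consequently, for every e > 0 there is a unique ξ_e ∈ (0, ξ_sup) with ρ_1 ρ_2 m(ξ_e)² + σ²(ξ_e) = e². -/

import Mathlib

open Matrix BigOperators

/-- The resolvent `(I_p - ξ C)⁻¹`. -/
noncomputable def resolv (p : ℕ) (C : Matrix (Fin p) (Fin p) ℝ) (ξ : ℝ) :
    Matrix (Fin p) (Fin p) ℝ :=
  ((1 : Matrix (Fin p) (Fin p) ℝ) - ξ • C)⁻¹

/-- `θ(ξ) = ρ₁ ρ₂ ξ vᵀ (I - ξC)⁻¹ v`. -/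
noncomputable def theta (p : ℕ) (C : Matrix (Fin p) (Fin p) ℝ) (v : Fin p → ℝ)
    (ρ1 ρ2 ξ : ℝ) : ℝ :=
  ρ1 * ρ2 * ξ * (v ⬝ᵥ (resolv p C ξ *ᵥ v))

/-- `q(ξ) = (ξ²/p) tr( ((I - ξC)⁻¹ C)² )`. -/
noncomputable def qfun (p : ℕ) (C : Matrix (Fin p) (Fin p) ℝ) (ξ : ℝ) : ℝ :=
  ξ ^ 2 / p * Matrix.trace ((resolv p C ξ * C) ^ 2)

/-- `s(ξ) = ρ₁ ρ₂ ξ² vᵀ (I - ξC)⁻¹ C (I - ξC)⁻¹ v`. -/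
noncomputable def sfun (p : ℕ) (C : Matrix (Fin p) (Fin p) ℝ) (v : Fin p → ℝ)
    (ρ1 ρ2 ξ : ℝ) : ℝ :=
  ρ1 * ρ2 * ξ ^ 2 * (v ⬝ᵥ ((resolv p C ξ * C * resolv p C ξ) *ᵥ v))

/-- `m(ξ) = 2 c_l θ(ξ) / (c_u (1 - θ(ξ)))`. -/
noncomputable def mfun (p : ℕ) (C : Matrix (Fin p) (Fin p) ℝ) (v : Fin p → ℝ)
    (ρ1 ρ2 cl cu ξ : ℝ) : ℝ :=
  2 * cl * theta p C v ρ1 ρ2 ξ / (cu * (1 - theta p C v ρ1 ρ2 ξ))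

/-- `σ²(ξ) = [ρ₁ρ₂ (2c_l + m(ξ)c_u)² s(ξ) + ρ₁ρ₂ (4c_l + m(ξ)²c_u) q(ξ)] / (c_u (c_u - q(ξ)))`. -/
noncomputable def sigma2 (p : ℕ) (C : Matrix (Fin p) (Fin p) ℝ) (v : Fin p → ℝ)
    (ρ1 ρ2 cl cu ξ : ℝ) : ℝ :=
  (ρ1 * ρ2 * (2 * cl + mfun p C v ρ1 ρ2 cl cu ξ * cu) ^ 2 * sfun p C v ρ1 ρ2 ξ
    + ρ1 * ρ2 * (4 * cl + (mfun p C v ρ1 ρ2 cl cu ξ) ^ 2 * cu) * qfun p C ξ)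
  / (cu * (cu - qfun p C ξ))

/-!
Diagonalising `C = U diag(λ) Uᵀ` turns `θ`, `q` and `s` into sums of nonnegative multiples of
`gᵢ(ξ) = ξ / (1 - ξ λᵢ)` and of its square. Each `gᵢ` is continuous, nonnegative and strictly
increasing on `[0, 1/λ_max)`, so `θ` and `q` are strictly increasing there (`θ` because `Uᵀ v ≠ 0`),
`s` is increasing, and all three vanish at `0`.
Read as a function of `t = θ`, `q` and `s`, the quantity `ρ₁ρ₂ m² + σ²` is increasing in each
argument while `t < 1` and `q < c_u`, strictly in `t`, and vanishes at `(0, 0, 0)`. At `ξ_sup`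
either `θ → 1`, so `m → ∞`, or `q → c_u`, so the denominator of `σ²` tends to `0⁺`. The
intermediate value theorem and strict monotonicity then give a unique `ξ_e`.
-/

open Set Filter Topology Unitary

lemma strictMonoOn_div_one_sub_mul (a : ℝ) :
    StrictMonoOn (fun x => x / (1 - x * a)) {x | x * a < 1} := by
  intro x (hx : x * a < 1) y (hy : y * a < 1) hxy
  rw [div_lt_div_iff₀ (by linarith) (by linarith)]
  linarith

lemma continuousOn_div_one_sub_mul (a : ℝ) :
    ContinuousOn (fun x => x / (1 - x * a)) {x | x * a < 1} :=
  continuousOn_id.div (by fun_prop) fun x (hx : x * a < 1) => by linarith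

lemma mul_lt_one_of_le_of_lt_inv {ξ a l : ℝ} (hξ : 0 ≤ ξ) (ha : a ≤ l) (hξl : ξ < l⁻¹) :
    ξ * a < 1 := by
  have hl : 0 < l := inv_pos.1 (hξ.trans_lt hξl)
  calc ξ * a ≤ ξ * l := mul_le_mul_of_nonneg_left ha hξ
    _ < l⁻¹ * l := mul_lt_mul_of_pos_right hξl hl
    _ = 1 := inv_mul_cancel₀ hl.ne'

lemma tendsto_sub_nhdsLT (c : ℝ) : Tendsto (fun t => c - t) (𝓝[<] c) (𝓝[>] 0) := by
  refine tendsto_nhdsWithin_iff.2 ⟨?_, eventually_nhdsWithin_of_forall fun t (ht : t < c) =>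
    sub_pos.2 ht⟩
  simpa using tendsto_nhdsWithin_of_tendsto_nhds ((continuous_sub_left c).tendsto c)

namespace Matrix

variable {n : Type*} [Fintype n] [DecidableEq n]

lemma trace_conjStarAlgAut (u : unitaryGroup n ℝ) (X : Matrix n n ℝ) :
    trace (conjStarAlgAut ℝ _ u X) = trace X := by
  rw [conjStarAlgAut_apply, trace_mul_cycle, Unitary.coe_star_mul_self, one_mul]

lemma dotProduct_conjStarAlgAut_diagonal_mulVec (u : unitaryGroup n ℝ) (d v : n → ℝ) :
    v ⬝ᵥ (conjStarAlgAut ℝ _ u (diagonal d) *ᵥ v) =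
      ∑ i, d i * (star (u : Matrix n n ℝ) *ᵥ v) i ^ 2 := by
  rw [conjStarAlgAut_apply, ← mulVec_mulVec, ← mulVec_mulVec, dotProduct_mulVec,
    ← mulVec_transpose, ← conjTranspose_eq_transpose_of_trivial, ← star_eq_conjTranspose]
  simp [dotProduct, mulVec_diagonal, sq, mul_left_comm]

lemma star_mulVec_ne_zero (u : unitaryGroup n ℝ) {v : n → ℝ} (hv : v ≠ 0) :
    star (u : Matrix n n ℝ) *ᵥ v ≠ 0 := by
  intro h
  exact hv (by simpa [mulVec_mulVec] using congrArg ((u : Matrix n n ℝ) *ᵥ ·) h)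

namespace IsHermitian

variable {C : Matrix n n ℝ} (hC : C.IsHermitian)

lemma conjStarAlgAut_diagonal_eigenvalues :
    conjStarAlgAut ℝ _ hC.eigenvectorUnitary (diagonal hC.eigenvalues) = C := by
  conv_rhs => rw [hC.spectral_theorem]
  simp [RCLike.ofReal_real_eq_id]

lemma inv_one_sub_smul {ξ : ℝ} (h : ∀ i, 1 - ξ * hC.eigenvalues i ≠ 0) :
    (1 - ξ • C)⁻¹ = conjStarAlgAut ℝ _ hC.eigenvectorUnitary
      (diagonal fun i => (1 - ξ * hC.eigenvalues i)⁻¹) := by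
  set Φ := conjStarAlgAut ℝ _ hC.eigenvectorUnitary
  have hdiag : 1 - ξ • C = Φ (diagonal fun i => 1 - ξ * hC.eigenvalues i) :=
    calc 1 - ξ • C = Φ 1 - ξ • Φ (diagonal hC.eigenvalues) := by
          rw [map_one, hC.conjStarAlgAut_diagonal_eigenvalues]
      _ = _ := by
          rw [← map_smul, ← map_sub, ← diagonal_one, ← diagonal_smul, diagonal_sub]
          rfl
  refine inv_eq_right_inv ?_
  rw [hdiag, ← map_mul, diagonal_mul_diagonal]
  simp [h]

end IsHermitian

namespace PosSemidef

variable {C : Matrix n n ℝ} (hC : C.PosSemidef) {b : ℝ}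

lemma one_sub_mul_eigenvalues_pos (hb : ∀ i, b * hC.1.eigenvalues i < 1) {x : ℝ}
    (hx : x ∈ Icc 0 b) (i : n) : 0 < 1 - x * hC.1.eigenvalues i := by
  nlinarith [hx.2, hb i, hC.eigenvalues_nonneg i]

lemma div_one_sub_mul_eigenvalues_nonneg (hb : ∀ i, b * hC.1.eigenvalues i < 1) {x : ℝ}
    (hx : x ∈ Icc 0 b) (i : n) : 0 ≤ x / (1 - x * hC.1.eigenvalues i) :=
  div_nonneg hx.1 (hC.one_sub_mul_eigenvalues_pos hb hx i).le

lemma strictMonoOn_div_one_sub_mul_eigenvalues (hb : ∀ i, b * hC.1.eigenvalues i < 1)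
    (i : n) : StrictMonoOn (fun x => x / (1 - x * hC.1.eigenvalues i)) (Icc 0 b) :=
  (strictMonoOn_div_one_sub_mul _).mono fun _ hx =>
    sub_pos.1 (hC.one_sub_mul_eigenvalues_pos hb hx i)

lemma continuousOn_div_one_sub_mul_eigenvalues (hb : ∀ i, b * hC.1.eigenvalues i < 1)
    (i : n) : ContinuousOn (fun x => x / (1 - x * hC.1.eigenvalues i)) (Icc 0 b) :=
  (continuousOn_div_one_sub_mul _).mono fun _ hx =>
    sub_pos.1 (hC.one_sub_mul_eigenvalues_pos hb hx i)

end PosSemidef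

end Matrix

section Resolvent

variable {p : ℕ} {C : Matrix (Fin p) (Fin p) ℝ} {v : Fin p → ℝ} {ρ1 ρ2 ξ b : ℝ}

lemma resolv_mul_eq (hC : C.IsHermitian) (h : ∀ i, 1 - ξ * hC.eigenvalues i ≠ 0) :
    resolv p C ξ * C = conjStarAlgAut ℝ _ hC.eigenvectorUnitary
      (diagonal fun i => (1 - ξ * hC.eigenvalues i)⁻¹ * hC.eigenvalues i) := by
  rw [resolv, hC.inv_one_sub_smul h, ← diagonal_mul_diagonal, map_mul,
    hC.conjStarAlgAut_diagonal_eigenvalues]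

lemma theta_eq_sum (hC : C.IsHermitian) (h : ∀ i, 1 - ξ * hC.eigenvalues i ≠ 0) :
    theta p C v ρ1 ρ2 ξ = ρ1 * ρ2 *
      ∑ i, (star (hC.eigenvectorUnitary : Matrix (Fin p) (Fin p) ℝ) *ᵥ v) i ^ 2 *
        (ξ / (1 - ξ * hC.eigenvalues i)) := by
  rw [theta, resolv, hC.inv_one_sub_smul h, dotProduct_conjStarAlgAut_diagonal_mulVec,
    mul_assoc, Finset.mul_sum, Finset.mul_sum, Finset.mul_sum]
  exact Finset.sum_congr rfl fun i _ => by ring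

lemma qfun_eq_sum (hC : C.IsHermitian) (h : ∀ i, 1 - ξ * hC.eigenvalues i ≠ 0) :
    qfun p C ξ =
      (p : ℝ)⁻¹ * ∑ i, (hC.eigenvalues i * (ξ / (1 - ξ * hC.eigenvalues i))) ^ 2 := by
  rw [qfun, resolv_mul_eq hC h, ← map_pow, trace_conjStarAlgAut, diagonal_pow,
    trace_diagonal, Finset.mul_sum, Finset.mul_sum]
  exact Finset.sum_congr rfl fun i _ => by simp only [Pi.pow_apply]; ring

lemma sfun_eq_sum (hC : C.IsHermitian) (h : ∀ i, 1 - ξ * hC.eigenvalues i ≠ 0) :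
    sfun p C v ρ1 ρ2 ξ = ρ1 * ρ2 *
      ∑ i, (star (hC.eigenvectorUnitary : Matrix (Fin p) (Fin p) ℝ) *ᵥ v) i ^ 2 *
        hC.eigenvalues i * (ξ / (1 - ξ * hC.eigenvalues i)) ^ 2 := by
  rw [sfun, resolv_mul_eq hC h, resolv, hC.inv_one_sub_smul h, ← map_mul,
    diagonal_mul_diagonal, dotProduct_conjStarAlgAut_diagonal_mulVec, mul_assoc,
    Finset.mul_sum, Finset.mul_sum, Finset.mul_sum]
  exact Finset.sum_congr rfl fun i _ => by ring

lemma theta_zero : theta p C v ρ1 ρ2 0 = 0 := by simp [theta]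

lemma qfun_zero : qfun p C 0 = 0 := by simp [qfun]

lemma sfun_zero : sfun p C v ρ1 ρ2 0 = 0 := by simp [sfun]

lemma theta_strictMonoOn (hC : C.PosSemidef) (hv : v ≠ 0) (hρ : 0 < ρ1 * ρ2)
    (hb : ∀ i, b * hC.1.eigenvalues i < 1) :
    StrictMonoOn (theta p C v ρ1 ρ2) (Icc 0 b) := by
  intro x hx y hy hxy
  have hg i := hC.strictMonoOn_div_one_sub_mul_eigenvalues hb i hx hy hxy
  obtain ⟨i₀, hi₀⟩ := Function.ne_iff.1 (star_mulVec_ne_zero hC.1.eigenvectorUnitary hv)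
  rw [theta_eq_sum hC.1 fun i => (hC.one_sub_mul_eigenvalues_pos hb hx i).ne',
    theta_eq_sum hC.1 fun i => (hC.one_sub_mul_eigenvalues_pos hb hy i).ne']
  refine mul_lt_mul_of_pos_left
    (Finset.sum_lt_sum (fun i _ => ?_) ⟨i₀, Finset.mem_univ _, ?_⟩) hρ
  · exact mul_le_mul_of_nonneg_left (hg i).le (sq_nonneg _)
  · exact mul_lt_mul_of_pos_left (hg i₀) (sq_pos_of_ne_zero hi₀)

lemma qfun_strictMonoOn (hC : C.PosDef) (hp : 0 < p) (hb : ∀ i, b * hC.1.eigenvalues i < 1) :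
    StrictMonoOn (qfun p C) (Icc 0 b) := by
  intro x hx y hy hxy
  have hC' := hC.posSemidef
  have hg i := hC'.strictMonoOn_div_one_sub_mul_eigenvalues hb i hx hy hxy
  rw [qfun_eq_sum hC.1 fun i => (hC'.one_sub_mul_eigenvalues_pos hb hx i).ne',
    qfun_eq_sum hC.1 fun i => (hC'.one_sub_mul_eigenvalues_pos hb hy i).ne']
  have : Nonempty (Fin p) := ⟨⟨0, hp⟩⟩
  refine mul_lt_mul_of_pos_left
    (Finset.sum_lt_sum_of_nonempty Finset.univ_nonempty fun i _ => ?_) (by positivity)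
  exact pow_lt_pow_left₀ (mul_lt_mul_of_pos_left (hg i) (hC.eigenvalues_pos i))
    (mul_nonneg (hC.eigenvalues_pos i).le (hC'.div_one_sub_mul_eigenvalues_nonneg hb hx i))
    two_ne_zero

lemma sfun_monotoneOn (hC : C.PosSemidef) (hρ : 0 ≤ ρ1 * ρ2)
    (hb : ∀ i, b * hC.1.eigenvalues i < 1) :
    MonotoneOn (sfun p C v ρ1 ρ2) (Icc 0 b) := by
  intro x hx y hy hxy
  have hg i := (hC.strictMonoOn_div_one_sub_mul_eigenvalues hb i).monotoneOn hx hy hxy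
  rw [sfun_eq_sum hC.1 fun i => (hC.one_sub_mul_eigenvalues_pos hb hx i).ne',
    sfun_eq_sum hC.1 fun i => (hC.one_sub_mul_eigenvalues_pos hb hy i).ne']
  refine mul_le_mul_of_nonneg_left (Finset.sum_le_sum fun i _ => ?_) hρ
  exact mul_le_mul_of_nonneg_left
    (pow_le_pow_left₀ (hC.div_one_sub_mul_eigenvalues_nonneg hb hx i) (hg i) 2)
    (mul_nonneg (sq_nonneg _) (hC.eigenvalues_nonneg i))

lemma theta_continuousOn (hC : C.PosSemidef) (hb : ∀ i, b * hC.1.eigenvalues i < 1) :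
    ContinuousOn (theta p C v ρ1 ρ2) (Icc 0 b) := by
  have hg := hC.continuousOn_div_one_sub_mul_eigenvalues hb
  exact ContinuousOn.congr (by fun_prop) fun x hx =>
    theta_eq_sum hC.1 fun i => (hC.one_sub_mul_eigenvalues_pos hb hx i).ne'

lemma qfun_continuousOn (hC : C.PosSemidef) (hb : ∀ i, b * hC.1.eigenvalues i < 1) :
    ContinuousOn (qfun p C) (Icc 0 b) := by
  have hg := hC.continuousOn_div_one_sub_mul_eigenvalues hb
  exact ContinuousOn.congr (by fun_prop) fun x hx =>
    qfun_eq_sum hC.1 fun i => (hC.one_sub_mul_eigenvalues_pos hb hx i).ne'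

lemma sfun_continuousOn (hC : C.PosSemidef) (hb : ∀ i, b * hC.1.eigenvalues i < 1) :
    ContinuousOn (sfun p C v ρ1 ρ2) (Icc 0 b) := by
  have hg := hC.continuousOn_div_one_sub_mul_eigenvalues hb
  exact ContinuousOn.congr (by fun_prop) fun x hx =>
    sfun_eq_sum hC.1 fun i => (hC.one_sub_mul_eigenvalues_pos hb hx i).ne'

end Resolvent

-- `mfun`, `sigma2` and `ρ₁ρ₂ mfun² + sigma2` as functions of `t = θ(ξ)`, `q(ξ)` and `s(ξ)`.
noncomputable def scoreMean (cl cu t : ℝ) : ℝ := 2 * cl * t / (cu * (1 - t))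

noncomputable def scoreVariance (ρ cl cu m q s : ℝ) : ℝ :=
  (ρ * (2 * cl + m * cu) ^ 2 * s + ρ * (4 * cl + m ^ 2 * cu) * q) / (cu * (cu - q))

noncomputable def scoreMeanSqNorm (ρ cl cu t q s : ℝ) : ℝ :=
  ρ * scoreMean cl cu t ^ 2 + scoreVariance ρ cl cu (scoreMean cl cu t) q s

section Scalar

variable {ρ cl cu t t' q q' s s' m m' : ℝ}

lemma scoreMean_nonneg (hcl : 0 ≤ cl) (hcu : 0 ≤ cu) (ht : 0 ≤ t) (ht1 : t ≤ 1) :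
    0 ≤ scoreMean cl cu t :=
  div_nonneg (by positivity) (mul_nonneg hcu (sub_nonneg.2 ht1))

lemma scoreMean_lt_scoreMean (hcl : 0 < cl) (hcu : 0 < cu) (htt' : t < t') (ht' : t' < 1) :
    scoreMean cl cu t < scoreMean cl cu t' := by
  have h1 : 0 < 1 - t' := sub_pos.2 ht'
  have h2 : 0 < 1 - t := by linarith
  rw [scoreMean, scoreMean, div_lt_div_iff₀ (by positivity) (by positivity)]
  nlinarith [mul_pos (mul_pos hcl hcu) (mul_pos hcu (sub_pos.2 htt'))]

lemma tendsto_scoreMean_atTop (hcl : 0 < cl) (hcu : 0 < cu) :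
    Tendsto (scoreMean cl cu) (𝓝[<] 1) atTop := by
  have hnum : Tendsto (fun t : ℝ => 2 * cl * t / cu) (𝓝[<] 1) (𝓝 (2 * cl * 1 / cu)) :=
    tendsto_nhdsWithin_of_tendsto_nhds (Continuous.tendsto (by fun_prop) 1)
  refine (hnum.pos_mul_atTop (by positivity)
    (tendsto_sub_nhdsLT 1).inv_tendsto_nhdsGT_zero).congr fun t => ?_
  rw [Pi.inv_apply, ← div_eq_mul_inv, div_div, scoreMean]

lemma scoreVariance_nonneg (hρ : 0 ≤ ρ) (hcl : 0 ≤ cl) (hcu : 0 < cu)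
    (hq : 0 ≤ q) (hqcu : q < cu) (hs : 0 ≤ s) : 0 ≤ scoreVariance ρ cl cu m q s :=
  div_nonneg (by positivity) (mul_nonneg hcu.le (sub_pos.2 hqcu).le)

lemma scoreVariance_le_scoreVariance (hρ : 0 ≤ ρ) (hcl : 0 ≤ cl) (hcu : 0 < cu)
    (hm : 0 ≤ m) (hmm' : m ≤ m') (hq : 0 ≤ q) (hqq' : q ≤ q') (hq' : q' < cu)
    (hs : 0 ≤ s) (hss' : s ≤ s') :
    scoreVariance ρ cl cu m q s ≤ scoreVariance ρ cl cu m' q' s' := by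
  have : 0 < cu - q' := sub_pos.2 hq'
  unfold scoreVariance
  gcongr
  exact add_nonneg (mul_nonneg (by positivity) (hs.trans hss'))
    (mul_nonneg (by positivity) (hq.trans hqq'))

lemma scoreMeanSqNorm_zero : scoreMeanSqNorm ρ cl cu 0 0 0 = 0 := by
  simp [scoreMeanSqNorm, scoreMean, scoreVariance]

lemma scoreMeanSqNorm_lt_scoreMeanSqNorm (hρ : 0 < ρ) (hcl : 0 < cl) (hcu : 0 < cu)
    (ht : 0 ≤ t) (htt' : t < t') (ht' : t' < 1) (hq : 0 ≤ q) (hqq' : q ≤ q') (hq' : q' < cu)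
    (hs : 0 ≤ s) (hss' : s ≤ s') :
    scoreMeanSqNorm ρ cl cu t q s < scoreMeanSqNorm ρ cl cu t' q' s' := by
  have hm := scoreMean_nonneg hcl.le hcu.le ht (htt'.trans ht').le
  have hmm' := scoreMean_lt_scoreMean hcl hcu htt' ht'
  exact add_lt_add_of_lt_of_le (by gcongr)
    (scoreVariance_le_scoreVariance hρ.le hcl.le hcu hm hmm'.le hq hqq' hq' hs hss')

lemma mul_scoreMean_sq_le_scoreMeanSqNorm (hρ : 0 ≤ ρ) (hcl : 0 ≤ cl) (hcu : 0 < cu)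
    (hq : 0 ≤ q) (hqcu : q < cu) (hs : 0 ≤ s) :
    ρ * scoreMean cl cu t ^ 2 ≤ scoreMeanSqNorm ρ cl cu t q s :=
  le_add_of_nonneg_right (scoreVariance_nonneg hρ hcl hcu hq hqcu hs)

lemma div_le_scoreMeanSqNorm (hρ : 0 ≤ ρ) (hcu : 0 < cu) (hq : 0 ≤ q) (hqcu : q < cu)
    (hs : 0 ≤ s) : ρ * (4 * cl) * q / (cu * (cu - q)) ≤ scoreMeanSqNorm ρ cl cu t q s := by
  have hden : 0 < cu * (cu - q) := mul_pos hcu (sub_pos.2 hqcu)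
  refine le_add_of_nonneg_of_le (by positivity) (div_le_div_of_nonneg_right ?_ hden.le)
  nlinarith [mul_nonneg hρ (mul_nonneg (sq_nonneg (2 * cl + scoreMean cl cu t * cu)) hs),
    mul_nonneg (mul_nonneg hρ (mul_nonneg (sq_nonneg (scoreMean cl cu t)) hcu.le)) hq]

end Scalar

section Composition

variable {α : Type*} {θ q s : α → ℝ} {ρ cl cu : ℝ}

lemma continuousOn_scoreMeanSqNorm_comp [TopologicalSpace α] {S : Set α} (hcu : cu ≠ 0)
    (hθc : ContinuousOn θ S) (hqc : ContinuousOn q S)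
    (hsc : ContinuousOn s S) (hθ : ∀ x ∈ S, θ x ≠ 1) (hq : ∀ x ∈ S, q x ≠ cu) :
    ContinuousOn (fun x => scoreMeanSqNorm ρ cl cu (θ x) (q x) (s x)) S := by
  have h1 : ∀ x ∈ S, cu * (1 - θ x) ≠ 0 := fun x hx =>
    mul_ne_zero hcu (sub_ne_zero.2 (hθ x hx).symm)
  have h2 : ∀ x ∈ S, cu * (cu - q x) ≠ 0 := fun x hx =>
    mul_ne_zero hcu (sub_ne_zero.2 (hq x hx).symm)
  simp only [scoreMeanSqNorm, scoreMean, scoreVariance]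
  fun_prop (disch := assumption)

lemma tendsto_scoreMeanSqNorm_atTop_of_tendsto_one {l : Filter α} (hρ : 0 < ρ) (hcl : 0 < cl)
    (hcu : 0 < cu) (hθ : Tendsto θ l (𝓝[<] 1)) (hqs : ∀ᶠ x in l, 0 ≤ q x ∧ q x < cu ∧ 0 ≤ s x) :
    Tendsto (fun x => scoreMeanSqNorm ρ cl cu (θ x) (q x) (s x)) l atTop := by
  have hm := ((tendsto_pow_atTop two_ne_zero).comp
    ((tendsto_scoreMean_atTop hcl hcu).comp hθ)).const_mul_atTop hρ
  exact tendsto_atTop_mono' _ (hqs.mono fun x ⟨hq, hqcu, hs⟩ =>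
    mul_scoreMean_sq_le_scoreMeanSqNorm hρ.le hcl.le hcu hq hqcu hs) hm

lemma tendsto_scoreMeanSqNorm_atTop_of_tendsto_cu {l : Filter α} (hρ : 0 < ρ) (hcl : 0 < cl)
    (hcu : 0 < cu) (hq : Tendsto q l (𝓝[<] cu)) (hs : ∀ᶠ x in l, 0 ≤ s x) :
    Tendsto (fun x => scoreMeanSqNorm ρ cl cu (θ x) (q x) (s x)) l atTop := by
  obtain ⟨hq_nhds, hq_lt⟩ := tendsto_nhdsWithin_iff.1 hq
  have hnum : Tendsto (fun x => ρ * (4 * cl) * q x / cu) l (𝓝 (ρ * (4 * cl) * cu / cu)) :=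
    (hq_nhds.const_mul _).div_const _
  refine tendsto_atTop_mono' _ ?_ (hnum.pos_mul_atTop (by positivity)
    ((tendsto_sub_nhdsLT cu).comp hq).inv_tendsto_nhdsGT_zero)
  filter_upwards [hq_lt, hq_nhds.eventually (lt_mem_nhds hcu), hs]
    with x (hqcu : q x < cu) hqpos hsx
  rw [Pi.inv_apply, Function.comp_apply, ← div_eq_mul_inv, div_div]
  exact div_le_scoreMeanSqNorm hρ.le hcu hqpos.le hqcu hsx

end Composition

lemma StrictMonoOn.existsUnique_eq_of_tendsto {f : ℝ → ℝ} {a b l y : ℝ} (hab : a < b)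
    (hf : StrictMonoOn f (Ioo a b)) (hc : ContinuousOn f (Ioo a b))
    (ha : Tendsto f (𝓝[>] a) (𝓝 l)) (hb : Tendsto f (𝓝[<] b) atTop) (hy : l < y) :
    ∃! x, x ∈ Ioo a b ∧ f x = y := by
  obtain ⟨x₁, hfx₁, hx₁⟩ :=
    ((ha.eventually (eventually_lt_nhds hy)).and (Ioo_mem_nhdsGT hab)).exists
  obtain ⟨x₂, hfx₂, hx₂⟩ :=
    ((hb.eventually (eventually_gt_atTop y)).and (Ioo_mem_nhdsLT hab)).exists
  obtain ⟨x, hx, hfx⟩ := hc.surjOn_Icc hx₁ hx₂ ⟨hfx₁.le, hfx₂.le⟩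
  exact ⟨x, ⟨hx, hfx⟩, fun x' ⟨hx', hfx'⟩ => hf.injOn hx' hx (hfx'.trans hfx.symm)⟩

lemma MonotoneOn.nonneg_of_map_zero {f : ℝ → ℝ} {b x : ℝ} (hf : MonotoneOn f (Icc 0 b))
    (h0 : f 0 = 0) (hx : x ∈ Icc 0 b) : 0 ≤ f x :=
  h0 ▸ hf (left_mem_Icc.2 (hx.1.trans hx.2)) hx hx.1

-- `ξ_sup`: the point where `(θ, q)` first leaves `[0, 1) × [0, c_u)`.
structure IsFirstExit (θ q : ℝ → ℝ) (cu b : ℝ) : Prop where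
  theta_lt : ∀ x ∈ Ico 0 b, θ x < 1
  q_lt : ∀ x ∈ Ico 0 b, q x < cu
  exit : θ b = 1 ∨ q b = cu

lemma isFirstExit_of_cases {θ q : ℝ → ℝ} {cu c b : ℝ} (hc : 0 < c) (hcu : 0 < cu)
    (hθ : StrictMonoOn θ (Icc 0 c)) (hq : StrictMonoOn q (Icc 0 c)) (hθc : θ c = 1)
    (hq0 : q 0 = 0) (hb : ((∀ x ∈ Ioo 0 c, q x < cu) ∧ b = c) ∨ (b ∈ Ioc 0 c ∧ q b = cu)) :
    b ∈ Ioc 0 c ∧ IsFirstExit θ q cu b := by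
  obtain ⟨hb0, hbc⟩ : b ∈ Ioc 0 c := by
    rcases hb with ⟨-, rfl⟩ | ⟨hb, -⟩
    exacts [⟨hc, le_rfl⟩, hb]
  have hsub x (hx : x ∈ Ico 0 b) : x ∈ Icc 0 c := ⟨hx.1, hx.2.le.trans hbc⟩
  refine ⟨⟨hb0, hbc⟩, fun x hx => hθc ▸ hθ (hsub x hx) ⟨hc.le, le_rfl⟩ (hx.2.trans_le hbc),
    fun x hx => ?_, ?_⟩
  · rcases hb with ⟨hall, rfl⟩ | ⟨-, hqb⟩
    · rcases hx.1.eq_or_lt with rfl | hx0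
      exacts [by rwa [hq0], hall x ⟨hx0, hx.2⟩]
    · exact hqb ▸ hq (hsub x hx) ⟨hb0.le, hbc⟩ hx.2
  · rcases hb with ⟨-, rfl⟩ | ⟨-, hqb⟩
    exacts [Or.inl hθc, Or.inr hqb]

section Profile

variable {θ q s : ℝ → ℝ} {ρ cl cu b : ℝ}

lemma IsFirstExit.tendsto_scoreMeanSqNorm_atTop (hexit : IsFirstExit θ q cu b) (hρ : 0 < ρ)
    (hcl : 0 < cl) (hcu : 0 < cu) (hb : 0 < b) (hθc : ContinuousOn θ (Icc 0 b))
    (hqc : ContinuousOn q (Icc 0 b)) (hq₀ : ∀ x ∈ Ico 0 b, 0 ≤ q x)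
    (hs₀ : ∀ x ∈ Ico 0 b, 0 ≤ s x) :
    Tendsto (fun x => scoreMeanSqNorm ρ cl cu (θ x) (q x) (s x)) (𝓝[<] b) atTop := by
  have hev : ∀ᶠ x in 𝓝[<] b, x ∈ Ico 0 b :=
    mem_of_superset (Ioo_mem_nhdsLT hb) Ioo_subset_Ico_self
  have hlim {f : ℝ → ℝ} (hf : ContinuousOn f (Icc 0 b)) : Tendsto f (𝓝[<] b) (𝓝 (f b)) :=
    (hf b (right_mem_Icc.2 hb.le)).tendsto.mono_left
      ((nhdsWithin_Ioo_eq_nhdsLT hb).symm.le.trans (nhdsWithin_mono _ Ioo_subset_Icc_self))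
  rcases hexit.exit with h | h
  · exact tendsto_scoreMeanSqNorm_atTop_of_tendsto_one hρ hcl hcu
      (tendsto_nhdsWithin_iff.2 ⟨h ▸ hlim hθc, hev.mono hexit.theta_lt⟩)
      (hev.mono fun x hx => ⟨hq₀ x hx, hexit.q_lt x hx, hs₀ x hx⟩)
  · exact tendsto_scoreMeanSqNorm_atTop_of_tendsto_cu hρ hcl hcu
      (tendsto_nhdsWithin_iff.2 ⟨h ▸ hlim hqc, hev.mono hexit.q_lt⟩) (hev.mono hs₀)

theorem scoreMeanSqNorm_comp_of_isFirstExit (hρ : 0 < ρ) (hcl : 0 < cl) (hcu : 0 < cu)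
    (hb : 0 < b) (hθ : StrictMonoOn θ (Icc 0 b)) (hq : MonotoneOn q (Icc 0 b))
    (hs : MonotoneOn s (Icc 0 b)) (hθc : ContinuousOn θ (Icc 0 b))
    (hqc : ContinuousOn q (Icc 0 b)) (hsc : ContinuousOn s (Icc 0 b))
    (hθ0 : θ 0 = 0) (hq0 : q 0 = 0) (hs0 : s 0 = 0) (hexit : IsFirstExit θ q cu b) :
    let F := fun x => scoreMeanSqNorm ρ cl cu (θ x) (q x) (s x)
    StrictMonoOn F (Ioo 0 b) ∧ Tendsto F (𝓝[>] 0) (𝓝 0) ∧ Tendsto F (𝓝[<] b) atTop ∧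
      ∀ y, 0 < y → ∃! x, x ∈ Ioo 0 b ∧ F x = y := by
  intro F
  have hq₀ x (hx : x ∈ Ico 0 b) := hq.nonneg_of_map_zero hq0 (Ico_subset_Icc_self hx)
  have hs₀ x (hx : x ∈ Ico 0 b) := hs.nonneg_of_map_zero hs0 (Ico_subset_Icc_self hx)
  have hmono : StrictMonoOn F (Ico 0 b) := fun x hx y hy hxy =>
    have hx' := Ico_subset_Icc_self hx
    have hy' := Ico_subset_Icc_self hy
    scoreMeanSqNorm_lt_scoreMeanSqNorm hρ hcl hcu (hθ.monotoneOn.nonneg_of_map_zero hθ0 hx')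
      (hθ hx' hy' hxy) (hexit.theta_lt y hy) (hq₀ x hx) (hq hx' hy' hxy.le) (hexit.q_lt y hy)
      (hs₀ x hx) (hs hx' hy' hxy.le)
  have hcont : ContinuousOn F (Ico 0 b) :=
    continuousOn_scoreMeanSqNorm_comp hcu.ne' (hθc.mono Ico_subset_Icc_self)
      (hqc.mono Ico_subset_Icc_self) (hsc.mono Ico_subset_Icc_self)
      (fun x hx => (hexit.theta_lt x hx).ne) fun x hx => (hexit.q_lt x hx).ne
  have hlim0 : Tendsto F (𝓝[>] 0) (𝓝 0) := by
    have hF0 : F 0 = 0 := by simp only [F, hθ0, hq0, hs0, scoreMeanSqNorm_zero]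
    have h := (hcont 0 (left_mem_Ico.2 hb)).tendsto.mono_left
      ((nhdsWithin_Ioo_eq_nhdsGT hb).symm.le.trans (nhdsWithin_mono _ Ioo_subset_Ico_self))
    rwa [hF0] at h
  have hlimb : Tendsto F (𝓝[<] b) atTop :=
    hexit.tendsto_scoreMeanSqNorm_atTop hρ hcl hcu hb hθc hqc hq₀ hs₀
  have hmono' := hmono.mono Ioo_subset_Ico_self
  exact ⟨hmono', hlim0, hlimb, fun y hy =>
    hmono'.existsUnique_eq_of_tendsto hb (hcont.mono Ioo_subset_Ico_self) hlim0 hlimb hy⟩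

end Profile

/-- with `ξ_m ∈ (0, 1/λ_max(C))` such that `θ(ξ_m) = 1`, and `ξ_sup = ξ_m`
if `q < c_u` on `(0, ξ_m)` and otherwise the point of `(0, ξ_m]` where `q = c_u`, the
function `F(ξ) = ρ₁ρ₂ m(ξ)² + σ²(ξ)` is strictly increasing on `(0, ξ_sup)`, tends to `0`
as `ξ → 0⁺` and to `+∞` as `ξ → ξ_sup⁻`; hence for every `e > 0` there is a unique
`ξ_e ∈ (0, ξ_sup)` with `ρ₁ρ₂ m(ξ_e)² + σ²(ξ_e) = e²`. -/
theorem stmt15 (p : ℕ) (hp : 0 < p) (C : Matrix (Fin p) (Fin p) ℝ) (hC : C.PosDef)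
    (lmax : ℝ) (hlmax : IsGreatest (Set.range hC.1.eigenvalues) lmax)
    (v : Fin p → ℝ) (hv : v ≠ 0) (ρ1 ρ2 cl cu : ℝ)
    (hρ1 : 0 < ρ1) (hρ2 : 0 < ρ2) (hcl : 0 < cl) (hcu : 0 < cu)
    (ξm : ℝ) (hξm : ξm ∈ Set.Ioo (0 : ℝ) lmax⁻¹) (hθξm : theta p C v ρ1 ρ2 ξm = 1)
    (ξsup : ℝ)
    (hξsup : ((∀ ξ ∈ Set.Ioo (0 : ℝ) ξm, qfun p C ξ < cu) ∧ ξsup = ξm) ∨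
      (¬ (∀ ξ ∈ Set.Ioo (0 : ℝ) ξm, qfun p C ξ < cu) ∧
        ξsup ∈ Set.Ioc (0 : ℝ) ξm ∧ qfun p C ξsup = cu)) :
    StrictMonoOn
      (fun ξ => ρ1 * ρ2 * (mfun p C v ρ1 ρ2 cl cu ξ) ^ 2 + sigma2 p C v ρ1 ρ2 cl cu ξ)
      (Set.Ioo (0 : ℝ) ξsup) ∧
    Filter.Tendsto
      (fun ξ => ρ1 * ρ2 * (mfun p C v ρ1 ρ2 cl cu ξ) ^ 2 + sigma2 p C v ρ1 ρ2 cl cu ξ)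
      (nhdsWithin 0 (Set.Ioi 0)) (nhds 0) ∧
    Filter.Tendsto
      (fun ξ => ρ1 * ρ2 * (mfun p C v ρ1 ρ2 cl cu ξ) ^ 2 + sigma2 p C v ρ1 ρ2 cl cu ξ)
      (nhdsWithin ξsup (Set.Iio ξsup)) Filter.atTop ∧
    ∀ e : ℝ, 0 < e → ∃! ξe : ℝ, ξe ∈ Set.Ioo (0 : ℝ) ξsup ∧
      ρ1 * ρ2 * (mfun p C v ρ1 ρ2 cl cu ξe) ^ 2 + sigma2 p C v ρ1 ρ2 cl cu ξe = e ^ 2 := by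
  have hρ : 0 < ρ1 * ρ2 := mul_pos hρ1 hρ2
  have hb i : ξm * hC.1.eigenvalues i < 1 :=
    mul_lt_one_of_le_of_lt_inv hξm.1.le (hlmax.2 ⟨i, rfl⟩) hξm.2
  have hθ := theta_strictMonoOn hC.posSemidef hv hρ hb
  have hq := qfun_strictMonoOn hC hp hb
  obtain ⟨⟨hsup0, hsupm⟩, hexit⟩ :=
    isFirstExit_of_cases hξm.1 hcu hθ hq hθξm qfun_zero (hξsup.imp_right And.right)
  have hsub : Icc 0 ξsup ⊆ Icc 0 ξm := Icc_subset_Icc_right hsupm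
  obtain ⟨hmono, hlim0, hlimsup, hsurj⟩ := scoreMeanSqNorm_comp_of_isFirstExit
    (s := sfun p C v ρ1 ρ2) hρ hcl hcu hsup0 (hθ.mono hsub) (hq.monotoneOn.mono hsub)
    ((sfun_monotoneOn hC.posSemidef hρ.le hb).mono hsub)
    ((theta_continuousOn hC.posSemidef hb).mono hsub)
    ((qfun_continuousOn hC.posSemidef hb).mono hsub)
    ((sfun_continuousOn hC.posSemidef hb).mono hsub) theta_zero qfun_zero sfun_zero hexit
  exact ⟨hmono, hlim0, hlimsup, fun e he => hsurj (e ^ 2) (pow_pos he 2)⟩
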